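/- The rank of a vector C = (c₁,…,c_σ) of nonnegative integers with sum n in lexicographic order equals ∑_{d=1}^{σ-1} ∑_{j=0}^{c_d−1} K(σ−d, ℓ_d − j), where ℓ_d = n − (c₁+…+c_{d−1}) and K(m,s) = binomial(s+m−1, m−1). -/

import Mathlib

/-!
Classify the vectors `D < C` by their first coordinate `j`: either `j < c₁`, and the remaining
`σ - 1` coordinates are an arbitrary vector with sum `n - j`, counted by stars and bars as
`K(σ - 1, n - j)`; or `j = c₁`, and the tail of `D` is lexicographically below the tail of `C`
among vectors with sum `n - c₁`, which is the same problem in dimension `σ - 1`. Unfolding this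
recursion gives the double sum; the last coordinate contributes nothing because it is determined
by the others.
-/

/-- Lexicographic strict order on vectors, first coordinate most significant. -/
def lexLt {σ : ℕ} (f g : Fin σ → ℕ) : Prop :=
  ∃ d : Fin σ, (∀ e, e < d → f e = g e) ∧ f d < g d

/-- `K m s` is the number of `m`-dimensional nonnegative integer vectors summing to `s`. -/
def K (m s : ℕ) : ℕ := Nat.choose (s + m - 1) (m - 1)

open Finset Finset.Nat

instance {σ : ℕ} (f g : Fin σ → ℕ) : Decidable (lexLt f g) := by
  unfold lexLt; infer_instance

theorem lexLt_succ_iff {k : ℕ} {D C : Fin (k + 1) → ℕ} :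
    lexLt D C ↔ D 0 < C 0 ∨ D 0 = C 0 ∧ lexLt (Fin.tail D) (Fin.tail C) := by
  constructor
  · rintro ⟨d, hagree, hlt⟩
    induction d using Fin.cases with
    | zero => exact Or.inl hlt
    | succ d =>
      refine Or.inr ⟨hagree 0 d.succ_pos, d, fun e he => hagree e.succ ?_, hlt⟩
      exact Fin.succ_lt_succ_iff.mpr he
  · rintro (hlt | ⟨h0, d, hagree, hlt⟩)
    · exact ⟨0, fun e he => absurd he (Fin.not_lt_zero e), hlt⟩
    · refine ⟨d.succ, fun e he => ?_, hlt⟩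
      induction e using Fin.cases with
      | zero => exact h0
      | succ e => exact hagree e (Fin.succ_lt_succ_iff.mp he)

theorem card_antidiagonalTuple (k n : ℕ) : #(antidiagonalTuple k n) = (k + n - 1).choose n := by
  rw [card_eq_of_equiv_fintype ((Equiv.subtypeEquivRight fun _ => mem_antidiagonalTuple).trans
    (Sym.equivNatSumOfFintype (Fin k) n).symm), Sym.card_sym_eq_choose, Fintype.card_fin]

theorem K_succ_eq_card_antidiagonalTuple (k n : ℕ) :
    K (k + 1) n = #(antidiagonalTuple (k + 1) n) := by
  rw [card_antidiagonalTuple, K, Nat.add_sub_cancel, show n + (k + 1) - 1 = n + k by omega,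
    show k + 1 + n - 1 = n + k by omega, Nat.choose_symm_add]

theorem filter_antidiagonalTuple_head_eq {k n j : ℕ} (hj : j ≤ n) :
    {D ∈ antidiagonalTuple (k + 1) n | D 0 = j} =
      (antidiagonalTuple k (n - j)).map
        ⟨Fin.cons j, Fin.cons_right_injective (α := fun _ ↦ ℕ) j⟩ := by
  ext D
  simp only [mem_filter, mem_map, mem_antidiagonalTuple, Fin.sum_univ_succ,
    Function.Embedding.coeFn_mk]
  constructor
  · rintro ⟨hsum, rfl⟩
    exact ⟨Fin.tail D, by simp only [Fin.tail]; omega, Fin.cons_self_tail D⟩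
  · rintro ⟨g, hg, rfl⟩
    simp only [Fin.cons_zero, Fin.cons_succ, hg, Nat.add_sub_cancel' hj, and_self]

theorem card_filter_antidiagonalTuple_head_eq {k n j : ℕ} (hj : j ≤ n)
    (p : (Fin k → ℕ) → Prop) [DecidablePred p] :
    #{D ∈ antidiagonalTuple (k + 1) n | D 0 = j ∧ p (Fin.tail D)} =
      #{g ∈ antidiagonalTuple k (n - j) | p g} := by
  rw [← filter_filter, filter_antidiagonalTuple_head_eq hj, filter_map, card_map]
  rfl

theorem card_filter_lexLt_succ {k n : ℕ} (C : Fin (k + 1) → ℕ) (hC : C 0 ≤ n) :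
    #{D ∈ antidiagonalTuple (k + 1) n | lexLt D C} =
      ∑ j ∈ range (C 0), #(antidiagonalTuple k (n - j)) +
        #{g ∈ antidiagonalTuple k (n - C 0) | lexLt g (Fin.tail C)} := by
  have hhead : ∀ D ∈ {D ∈ antidiagonalTuple (k + 1) n | lexLt D C}, D 0 ∈ range (C 0 + 1) := by
    intro D hD
    rw [mem_filter, lexLt_succ_iff] at hD
    rw [mem_range]
    omega
  rw [card_eq_sum_card_fiberwise hhead, sum_range_succ]
  congr 1
  · refine sum_congr rfl fun j hj => ?_
    rw [mem_range] at hj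
    have hfiber : {D ∈ antidiagonalTuple (k + 1) n | lexLt D C ∧ D 0 = j} =
        {D ∈ antidiagonalTuple (k + 1) n | D 0 = j} :=
      filter_congr fun D _ => ⟨And.right, fun h0 => ⟨lexLt_succ_iff.mpr (Or.inl (h0 ▸ hj)), h0⟩⟩
    rw [filter_filter, hfiber, filter_antidiagonalTuple_head_eq (by omega), card_map]
  · rw [filter_filter, ← card_filter_antidiagonalTuple_head_eq hC]
    congr 1
    refine filter_congr fun D _ => ⟨fun ⟨hlt, h0⟩ => ⟨h0, ?_⟩, fun ⟨h0, htail⟩ => ⟨?_, h0⟩⟩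
    · exact ((lexLt_succ_iff.mp hlt).resolve_left h0.not_lt).2
    · exact lexLt_succ_iff.mpr (Or.inr ⟨h0, htail⟩)

theorem sum_filter_lt_succ {k : ℕ} (C : Fin (k + 1) → ℕ) (d : Fin k) :
    ∑ e ∈ univ.filter (· < d.succ), C e = C 0 + ∑ e ∈ univ.filter (· < d), Fin.tail C e := by
  simp [Finset.sum_filter, Fin.sum_univ_succ, Fin.succ_lt_succ_iff, Fin.tail]

def rankSum {σ : ℕ} (C : Fin σ → ℕ) (n : ℕ) : ℕ :=
  ∑ d ∈ univ.filter (fun d : Fin σ => (d : ℕ) + 1 < σ),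
    ∑ j ∈ range (C d), K (σ - ((d : ℕ) + 1)) ((n - ∑ e ∈ univ.filter (· < d), C e) - j)

theorem rankSum_succ {k n : ℕ} (C : Fin (k + 1) → ℕ) (hC : C 0 ≤ n) :
    rankSum C n = ∑ j ∈ range (C 0), #(antidiagonalTuple k (n - j)) +
      rankSum (Fin.tail C) (n - C 0) := by
  rw [rankSum, rankSum, sum_filter, sum_filter (p := fun d : Fin k => (d : ℕ) + 1 < k),
    Fin.sum_univ_succ]
  congr 1
  · rcases k with _ | k
    -- for `σ = 1` the filter drops `d = 0`, and no vector of length `0` has positive sum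
    · refine (sum_eq_zero fun j hj => ?_).symm
      rw [mem_range] at hj
      rw [card_antidiagonalTuple]
      exact Nat.choose_eq_zero_of_lt (by omega)
    · rw [if_pos (by simp)]
      refine sum_congr rfl fun j _ => ?_
      simp [K_succ_eq_card_antidiagonalTuple]
  · refine sum_congr rfl fun d _ => ?_
    simp only [Fin.val_succ, sum_filter_lt_succ, Nat.sub_sub, Nat.add_lt_add_iff_right,
      Nat.add_sub_add_right]
    rfl

theorem card_filter_lexLt {σ n : ℕ} (C : Fin σ → ℕ) (hC : ∑ i, C i = n) :
    #{D ∈ antidiagonalTuple σ n | lexLt D C} = rankSum C n := by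
  induction σ generalizing n with
  | zero => simp [rankSum, lexLt]
  | succ k ih =>
    have hsum : C 0 + ∑ i, Fin.tail C i = n := by rw [← hC, Fin.sum_univ_succ]; rfl
    rw [card_filter_lexLt_succ C (by omega), rankSum_succ C (by omega), ih _ (by omega)]

theorem rank_formula_general (σ n : ℕ) (C : Fin σ → ℕ)
    (hC : ∑ i, C i = n) :
    Nat.card {D : {f : Fin σ → ℕ // ∑ i, f i = n} // lexLt D.1 C} =
      ∑ d ∈ Finset.univ.filter (fun d : Fin σ => (d : ℕ) + 1 < σ),
        ∑ j ∈ Finset.range (C d),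
          K (σ - ((d : ℕ) + 1))
            ((n - ∑ e ∈ Finset.univ.filter (fun e : Fin σ => e < d), C e) - j) := by
  have e : {D : {f : Fin σ → ℕ // ∑ i, f i = n} // lexLt D.1 C} ≃
      {D // D ∈ {D ∈ antidiagonalTuple σ n | lexLt D C}} :=
    (Equiv.subtypeSubtypeEquivSubtypeInter (fun f => ∑ i, f i = n) (lexLt · C)).trans
      (Equiv.subtypeEquivRight fun D => by rw [mem_filter, mem_antidiagonalTuple])
  rw [Nat.card_congr e, Nat.card_eq_finsetCard]
  exact card_filter_lexLt C hC

theorem rank_formula (σ n : ℕ) (hσ : 1 ≤ σ) (C : Fin σ → ℕ)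
    (hC : ∑ i, C i = n) :
    Nat.card {D : {f : Fin σ → ℕ // ∑ i, f i = n} // lexLt D.1 C} =
      ∑ d ∈ Finset.univ.filter (fun d : Fin σ => (d : ℕ) + 1 < σ),
        ∑ j ∈ Finset.range (C d),
          K (σ - ((d : ℕ) + 1))
            ((n - ∑ e ∈ Finset.univ.filter (fun e : Fin σ => e < d), C e) - j) :=
  rank_formula_general σ n C hC
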